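/- arXiv:2511.15093 — 7 statements merged into one kernel-verified Lean document; each statement's English description precedes it below -/
import Mathlib

section
/- Let V be a real inner product space and let σ₂ ∈ (0, 1/2). Let g, d, t : ℕ → V be sequences satisfying: g(q) ≠ 0 for all q; d(0) = −g(0); the Fletcher–Reeves update d(q+1) = −g(q+1) + (‖g(q+1)‖²/‖g(q)‖²) • t(q) for all q; the transport bound ‖t(q)‖ ≤ ‖d(q)‖ for all q; the curvature (strong Wolfe) condition |⟨g(q+1), t(q)⟩| ≤ σ₂ · |⟨g(q), d(q)⟩| for all q; and the Zoutendijk condition that the series Σ_q ⟨g(q), d(q)⟩² / ‖d(q)‖² converges. Then liminf_{q→∞} ‖g(q)‖ = 0. -/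
open RealInnerProductSpace

set_option maxHeartbeats 2000000 in
/-- Convergence of the Fletcher–Reeves Riemannian conjugate gradient method:
under the Zoutendijk condition, the strong Wolfe curvature condition and
nonexpansive vector transport, the gradient norms have liminf zero. -/
theorem prcgd_liminf_grad_zero
    {V : Type*} [NormedAddCommGroup V] [InnerProductSpace ℝ V]
    (σ₂ : ℝ) (hσ₂ : 0 < σ₂ ∧ σ₂ < 1 / 2)
    (g d t : ℕ → V)
    (hg : ∀ q, g q ≠ 0)
    (hd0 : d 0 = -g 0)
    (hFR : ∀ q, d (q + 1) = -g (q + 1) + (‖g (q + 1)‖ ^ 2 / ‖g q‖ ^ 2) • t q)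
    (htran : ∀ q, ‖t q‖ ≤ ‖d q‖)
    (hwolfe : ∀ q, |⟪g (q + 1), t q⟫| ≤ σ₂ * |⟪g q, d q⟫|)
    (hzout : Summable fun q => (⟪g q, d q⟫) ^ 2 / ‖d q‖ ^ 2) :
    Filter.liminf (fun q => ‖g q‖) Filter.atTop = 0 := by
  obtain ⟨hs0, hs2⟩ := hσ₂
  have h1s : (0:ℝ) < 1 - σ₂ := by linarith
  have h12 : (0:ℝ) < 1 - 2 * σ₂ := by linarith
  have hgn : ∀ q, (0:ℝ) < ‖g q‖ ^ 2 := fun q => pow_pos (norm_pos_iff.mpr (hg q)) 2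
  -- Al-Baali key estimate (multiplied form, no division)
  have key : ∀ q, (1 - σ₂) * |⟪g q, d q⟫ + ‖g q‖ ^ 2| ≤ (σ₂ - σ₂ ^ (q + 1)) * ‖g q‖ ^ 2 := by
    intro q
    induction q with
    | zero =>
      have h : ⟪g 0, d 0⟫ = -‖g 0‖ ^ 2 := by
        rw [hd0, inner_neg_right, real_inner_self_eq_norm_sq]
      rw [h]
      simp
    | succ q ih =>
      set β : ℝ := ‖g (q + 1)‖ ^ 2 / ‖g q‖ ^ 2 with hβ
      have hβpos : 0 < β := div_pos (hgn _) (hgn _)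
      have hip : ⟪g (q + 1), d (q + 1)⟫ + ‖g (q + 1)‖ ^ 2 = β * ⟪g (q + 1), t q⟫ := by
        rw [hFR q, inner_add_right, inner_neg_right, real_inner_smul_right,
          real_inner_self_eq_norm_sq]
        ring
      have habsq : (1 - σ₂) * |⟪g q, d q⟫| ≤ (1 - σ₂ ^ (q + 1)) * ‖g q‖ ^ 2 := by
        have h1 : |⟪g q, d q⟫| ≤ |⟪g q, d q⟫ + ‖g q‖ ^ 2| + ‖g q‖ ^ 2 := by
          calc |⟪g q, d q⟫| = |(⟪g q, d q⟫ + ‖g q‖ ^ 2) - ‖g q‖ ^ 2| := by ring_nf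
            _ ≤ |⟪g q, d q⟫ + ‖g q‖ ^ 2| + |‖g q‖ ^ 2| := abs_sub _ _
            _ = |⟪g q, d q⟫ + ‖g q‖ ^ 2| + ‖g q‖ ^ 2 := by
                rw [abs_of_nonneg (hgn q).le]
        nlinarith [hgn q, ih]
      have hβg : β * ‖g q‖ ^ 2 = ‖g (q + 1)‖ ^ 2 := div_mul_cancel₀ _ (hgn q).ne'
      have h2 : (1 - σ₂) * |⟪g (q + 1), t q⟫| ≤ (1 - σ₂) * (σ₂ * |⟪g q, d q⟫|) :=
        mul_le_mul_of_nonneg_left (hwolfe q) h1s.le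
      have h3 : (1 - σ₂) * (σ₂ * |⟪g q, d q⟫|) ≤ σ₂ * ((1 - σ₂ ^ (q + 1)) * ‖g q‖ ^ 2) := by
        nlinarith [habsq, abs_nonneg ⟪g q, d q⟫]
      rw [hip, abs_mul, abs_of_pos hβpos]
      have h4 : (1 - σ₂) * (β * |⟪g (q + 1), t q⟫|)
          ≤ β * (σ₂ * ((1 - σ₂ ^ (q + 1)) * ‖g q‖ ^ 2)) := by
        nlinarith [h2, h3, hβpos, abs_nonneg ⟪g (q + 1), t q⟫]
      have h5 : β * (σ₂ * ((1 - σ₂ ^ (q + 1)) * ‖g q‖ ^ 2))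
          = (σ₂ - σ₂ ^ (q + 1 + 1)) * ‖g (q + 1)‖ ^ 2 := by
        rw [← hβg]; ring
      linarith [h4, h5.le, h5.ge]
  -- descent: inner products are negative, bounded away relative to ‖g‖²
  have hneg : ∀ q, (1 - σ₂) * ⟪g q, d q⟫ ≤ -((1 - 2 * σ₂) * ‖g q‖ ^ 2) := by
    intro q
    have h1 := key q
    have h2 : ⟪g q, d q⟫ + ‖g q‖ ^ 2 ≤ |⟪g q, d q⟫ + ‖g q‖ ^ 2| := le_abs_self _
    have h3 : (0:ℝ) < σ₂ ^ (q + 1) := pow_pos hs0 _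
    nlinarith [hgn q]
  have habs : ∀ q, (1 - σ₂) * |⟪g q, d q⟫| ≤ ‖g q‖ ^ 2 := by
    intro q
    have h1 := key q
    have h2 : |⟪g q, d q⟫| ≤ |⟪g q, d q⟫ + ‖g q‖ ^ 2| + ‖g q‖ ^ 2 := by
      calc |⟪g q, d q⟫| = |(⟪g q, d q⟫ + ‖g q‖ ^ 2) - ‖g q‖ ^ 2| := by ring_nf
        _ ≤ |⟪g q, d q⟫ + ‖g q‖ ^ 2| + |‖g q‖ ^ 2| := abs_sub _ _
        _ = |⟪g q, d q⟫ + ‖g q‖ ^ 2| + ‖g q‖ ^ 2 := by rw [abs_of_nonneg (hgn q).le]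
    have h3 : (0:ℝ) ≤ σ₂ ^ (q + 1) := (pow_pos hs0 _).le
    nlinarith [hgn q]
  have hdne : ∀ q, (0:ℝ) < ‖d q‖ ^ 2 := by
    intro q
    have h1 := hneg q
    have h2 : ⟪g q, d q⟫ < 0 := by nlinarith [hgn q]
    have : d q ≠ 0 := by
      intro h
      rw [h, inner_zero_right] at h2
      exact lt_irrefl 0 h2
    exact pow_pos (norm_pos_iff.mpr this) 2
  -- growth estimate on ‖d‖²
  have hdsq : ∀ q, (1 - σ₂) * ‖d (q + 1)‖ ^ 2 ≤ (1 + σ₂) * ‖g (q + 1)‖ ^ 2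
      + (1 - σ₂) * (‖g (q + 1)‖ ^ 2 / ‖g q‖ ^ 2) ^ 2 * ‖d q‖ ^ 2 := by
    intro q
    set β : ℝ := ‖g (q + 1)‖ ^ 2 / ‖g q‖ ^ 2 with hβ
    have hβpos : 0 < β := div_pos (hgn _) (hgn _)
    have hexp : ‖d (q + 1)‖ ^ 2
        = ‖g (q + 1)‖ ^ 2 - 2 * β * ⟪g (q + 1), t q⟫ + β ^ 2 * ‖t q‖ ^ 2 := by
      rw [hFR q, norm_add_sq_real, norm_neg, inner_neg_left, real_inner_smul_right,
        norm_smul, Real.norm_eq_abs, abs_of_pos hβpos, mul_pow]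
      ring
    have hβg : β * ‖g q‖ ^ 2 = ‖g (q + 1)‖ ^ 2 := div_mul_cancel₀ _ (hgn q).ne'
    have h1 : -⟪g (q + 1), t q⟫ ≤ |⟪g (q + 1), t q⟫| := neg_le_abs _
    have h2 := hwolfe q
    have h3 := habs q
    have h4 : ‖t q‖ ^ 2 ≤ ‖d q‖ ^ 2 := by
      nlinarith [htran q, norm_nonneg (t q), norm_nonneg (d q)]
    rw [hexp]
    nlinarith [mul_le_mul_of_nonneg_left h2 (mul_pos hβpos h1s).le,
      mul_le_mul_of_nonneg_left h3 hβpos.le,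
      mul_le_mul_of_nonneg_left h4 (mul_pos (pow_pos hβpos 2) h1s).le,
      mul_le_mul_of_nonneg_left h1 (mul_pos hβpos h1s).le]
  -- main argument: frequently small gradients
  have hfreq : ∀ ε : ℝ, 0 < ε → ∃ᶠ q in Filter.atTop, ‖g q‖ ≤ ε := by
    intro ε hε
    by_contra hcon
    rw [Filter.not_frequently] at hcon
    simp only [not_le] at hcon
    rw [Filter.eventually_atTop] at hcon
    obtain ⟨N, hN⟩ := hcon
    -- for q ≥ N, ε² < ‖g q‖²
    have hNbig : ∀ m : ℕ, ε ^ 2 ≤ ‖g (N + m)‖ ^ 2 := by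
      intro m
      have := hN (N + m) (Nat.le_add_right N m)
      nlinarith [hε]
    set C : ℝ := ‖d N‖ ^ 2 / (‖g N‖ ^ 2) ^ 2 with hC
    have hCpos : 0 < C := div_pos (hdne N) (pow_pos (hgn N) 2)
    set E : ℝ := (1 + σ₂) / ((1 - σ₂) * ε ^ 2) with hE
    have hEpos : 0 < E := div_pos (by linarith) (by positivity)
    -- inductive bound on ‖d‖²
    have hbound : ∀ m : ℕ, ‖d (N + m)‖ ^ 2 ≤ (C + m * E) * (‖g (N + m)‖ ^ 2) ^ 2 := by
      intro m
      induction m with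
      | zero =>
        simp only [Nat.add_zero, Nat.cast_zero, zero_mul, add_zero]
        rw [hC, div_mul_cancel₀ _ (pow_pos (hgn N) 2).ne']
      | succ m ih =>
        have hstep := hdsq (N + m)
        have hβg : (‖g (N + m + 1)‖ ^ 2 / ‖g (N + m)‖ ^ 2) ^ 2 * (‖g (N + m)‖ ^ 2) ^ 2
            = (‖g (N + m + 1)‖ ^ 2) ^ 2 := by
          rw [div_pow]
          exact div_mul_cancel₀ _ (pow_pos (hgn (N + m)) 2).ne'
        have hmono : (‖g (N + m + 1)‖ ^ 2 / ‖g (N + m)‖ ^ 2) ^ 2 * ‖d (N + m)‖ ^ 2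
            ≤ (C + m * E) * (‖g (N + m + 1)‖ ^ 2) ^ 2 := by
          calc (‖g (N + m + 1)‖ ^ 2 / ‖g (N + m)‖ ^ 2) ^ 2 * ‖d (N + m)‖ ^ 2
              ≤ (‖g (N + m + 1)‖ ^ 2 / ‖g (N + m)‖ ^ 2) ^ 2
                * ((C + m * E) * (‖g (N + m)‖ ^ 2) ^ 2) := by
                apply mul_le_mul_of_nonneg_left ih (by positivity)
            _ = (C + m * E) * ((‖g (N + m + 1)‖ ^ 2 / ‖g (N + m)‖ ^ 2) ^ 2
                * (‖g (N + m)‖ ^ 2) ^ 2) := by ring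
            _ = (C + m * E) * (‖g (N + m + 1)‖ ^ 2) ^ 2 := by rw [hβg]
        -- (1+σ₂) * y ≤ (1-σ₂) * E * y²  since y ≥ ε²
        have hEy : (1 + σ₂) * ‖g (N + m + 1)‖ ^ 2
            ≤ (1 - σ₂) * E * (‖g (N + m + 1)‖ ^ 2) ^ 2 := by
          have hy : ε ^ 2 ≤ ‖g (N + m + 1)‖ ^ 2 := by
            have := hNbig (m + 1)
            have heq : N + (m + 1) = N + m + 1 := by ring
            rwa [heq] at this
          have hEe : (1 - σ₂) * E * ε ^ 2 = 1 + σ₂ := by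
            rw [hE]; field_simp
          have h5 : (1 - σ₂) * E * ε ^ 2 ≤ (1 - σ₂) * E * ‖g (N + m + 1)‖ ^ 2 :=
            mul_le_mul_of_nonneg_left hy (mul_pos h1s hEpos).le
          calc (1 + σ₂) * ‖g (N + m + 1)‖ ^ 2
              = ((1 - σ₂) * E * ε ^ 2) * ‖g (N + m + 1)‖ ^ 2 := by rw [hEe]
            _ ≤ ((1 - σ₂) * E * ‖g (N + m + 1)‖ ^ 2) * ‖g (N + m + 1)‖ ^ 2 :=
                mul_le_mul_of_nonneg_right h5 (hgn _).le
            _ = (1 - σ₂) * E * (‖g (N + m + 1)‖ ^ 2) ^ 2 := by ring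
        have hcast : ((m + 1 : ℕ) : ℝ) = (m : ℝ) + 1 := by push_cast; ring
        have hgoal : N + (m + 1) = N + m + 1 := by ring
        rw [hgoal, hcast]
        have h7 : (1 - σ₂) * ((‖g (N + m + 1)‖ ^ 2 / ‖g (N + m)‖ ^ 2) ^ 2 * ‖d (N + m)‖ ^ 2)
            ≤ (1 - σ₂) * ((C + ↑m * E) * (‖g (N + m + 1)‖ ^ 2) ^ 2) :=
          mul_le_mul_of_nonneg_left hmono h1s.le
        have h8 : (1 - σ₂) * ‖d (N + m + 1)‖ ^ 2
            ≤ (1 - σ₂) * ((C + (↑m + 1) * E) * (‖g (N + m + 1)‖ ^ 2) ^ 2) := by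
          linarith [hstep, h7, hEy]
        exact le_of_mul_le_mul_left h8 h1s
    -- lower bound on the Zoutendijk terms
    have hterm : ∀ m : ℕ, (1 - 2 * σ₂) ^ 2 / (1 - σ₂) ^ 2 / (C + m * E)
        ≤ ⟪g (N + m), d (N + m)⟫ ^ 2 / ‖d (N + m)‖ ^ 2 := by
      intro m
      have hCmE : 0 < C + m * E := by positivity
      have h1 := hneg (N + m)
      have hip2 : (1 - 2 * σ₂) ^ 2 * (‖g (N + m)‖ ^ 2) ^ 2
          ≤ (1 - σ₂) ^ 2 * ⟪g (N + m), d (N + m)⟫ ^ 2 := by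
        have hY := mul_pos h12 (hgn (N + m))
        have hA : 0 ≤ -((1 - σ₂) * ⟪g (N + m), d (N + m)⟫) - (1 - 2 * σ₂) * ‖g (N + m)‖ ^ 2 := by
          linarith
        have hB : 0 ≤ -((1 - σ₂) * ⟪g (N + m), d (N + m)⟫) + (1 - 2 * σ₂) * ‖g (N + m)‖ ^ 2 := by
          linarith
        nlinarith [mul_nonneg hA hB]
      have hb := hbound m
      have hdpos := hdne (N + m)
      have hpos2 : (0:ℝ) < (1 - σ₂) ^ 2 * (C + ↑m * E) := mul_pos (pow_pos h1s 2) hCmE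
      rw [div_div, div_le_div_iff₀ hpos2 hdpos]
      have t1 : (1 - 2 * σ₂) ^ 2 * ‖d (N + m)‖ ^ 2
          ≤ (1 - 2 * σ₂) ^ 2 * ((C + ↑m * E) * (‖g (N + m)‖ ^ 2) ^ 2) :=
        mul_le_mul_of_nonneg_left hb (by positivity)
      have t2 : (C + ↑m * E) * ((1 - 2 * σ₂) ^ 2 * (‖g (N + m)‖ ^ 2) ^ 2)
          ≤ (C + ↑m * E) * ((1 - σ₂) ^ 2 * ⟪g (N + m), d (N + m)⟫ ^ 2) :=
        mul_le_mul_of_nonneg_left hip2 hCmE.le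
      nlinarith [t1, t2]
    -- summability transfer yields a contradiction with harmonic divergence
    have hsum : Summable fun m : ℕ => ⟪g (m + N), d (m + N)⟫ ^ 2 / ‖d (m + N)‖ ^ 2 :=
      (summable_nat_add_iff N).mpr hzout
    set c2 : ℝ := (1 - 2 * σ₂) ^ 2 / (1 - σ₂) ^ 2 with hc2
    have hc2pos : 0 < c2 := by positivity
    have hsumf : Summable fun m : ℕ => c2 / (C + m * E) := by
      apply Summable.of_nonneg_of_le (fun m => by positivity) _ hsum
      intro m
      have := hterm m
      rwa [Nat.add_comm N m] at this
    have : Summable fun n : ℕ => (1 : ℝ) / n := by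
      apply Summable.of_nonneg_of_le (fun n => by positivity) _
        (hsumf.mul_left ((C + E) / c2))
      intro n
      rcases Nat.eq_zero_or_pos n with hn | hn
      · subst hn
        simp only [Nat.cast_zero, zero_mul, add_zero, CharP.cast_eq_zero, div_zero]
        exact mul_nonneg (div_nonneg (by linarith) hc2pos.le) (div_nonneg hc2pos.le hCpos.le)
      · have hn1 : (1:ℝ) ≤ n := by exact_mod_cast hn
        have hCnE : 0 < C + n * E := by positivity
        rw [div_le_iff₀ (by positivity : (0:ℝ) < (n:ℝ))]
        have heq : (C + E) / c2 * (c2 / (C + n * E)) = (C + E) / (C + n * E) := by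
          field_simp
        rw [heq, div_mul_eq_mul_div, le_div_iff₀ hCnE]
        nlinarith [hEpos, hCpos]
    exact Real.not_summable_one_div_natCast this
  -- conclude liminf = 0
  have hbdd : Filter.IsBoundedUnder (· ≥ ·) Filter.atTop (fun q => ‖g q‖) :=
    Filter.isBoundedUnder_of ⟨0, fun q => norm_nonneg _⟩
  have hcob : Filter.IsCoboundedUnder (· ≥ ·) Filter.atTop (fun q => ‖g q‖) :=
    Filter.IsCoboundedUnder.of_frequently_le (hfreq 1 one_pos)
  have hge : (0:ℝ) ≤ Filter.liminf (fun q => ‖g q‖) Filter.atTop :=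
    Filter.le_liminf_of_le hcob (Filter.Eventually.of_forall fun q => norm_nonneg _)
  have hle : Filter.liminf (fun q => ‖g q‖) Filter.atTop ≤ 0 := by
    by_contra hcon
    push_neg at hcon
    have h2 := Filter.liminf_le_of_frequently_le
      (hfreq (Filter.liminf (fun q => ‖g q‖) Filter.atTop / 2) (by linarith)) hbdd
    linarith
  linarith
end

section
/- Let V be a real inner product space and let σ₂ ∈ (0, 1/2). Let g, d, t : ℕ → V be sequences satisfying: g(q) ≠ 0 for all q; d(0) = −g(0); d(q+1) = −g(q+1) + (‖g(q+1)‖²/‖g(q)‖²) • t(q) for all q; and |⟨g(q+1), t(q)⟩| ≤ σ₂ · |⟨g(q), d(q)⟩| for all q. Then for every q, −1/(1−σ₂) ≤ ⟨g(q), d(q)⟩/‖g(q)‖² ≤ (2σ₂−1)/(1−σ₂); in particular ⟨g(q), d(q)⟩ < 0, so each d(q) is a descent direction. -/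
open RealInnerProductSpace

/-- The key sandwich inequality for Fletcher–Reeves directions: every search
direction generated by the P-PRCGD recursion is a descent direction, with
`-1/(1-σ₂) ≤ ⟪g q, d q⟫ / ‖g q‖² ≤ (2σ₂ - 1)/(1 - σ₂)`. -/
theorem prcgd_sandwich_inequality
    {V : Type*} [NormedAddCommGroup V] [InnerProductSpace ℝ V]
    (σ₂ : ℝ) (hσ₂ : 0 < σ₂ ∧ σ₂ < 1 / 2)
    (g d t : ℕ → V)
    (hg : ∀ q, g q ≠ 0)
    (hd0 : d 0 = -g 0)
    (hFR : ∀ q, d (q + 1) = -g (q + 1) + (‖g (q + 1)‖ ^ 2 / ‖g q‖ ^ 2) • t q)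
    (hwolfe : ∀ q, |⟪g (q + 1), t q⟫| ≤ σ₂ * |⟪g q, d q⟫|) :
    ∀ q, (-1 / (1 - σ₂) ≤ ⟪g q, d q⟫ / ‖g q‖ ^ 2 ∧
          ⟪g q, d q⟫ / ‖g q‖ ^ 2 ≤ (2 * σ₂ - 1) / (1 - σ₂)) ∧
         ⟪g q, d q⟫ < 0 := by
  obtain ⟨hσ0, hσh⟩ := hσ₂
  have h1σ : 0 < 1 - σ₂ := by linarith
  have hnorm : ∀ q, (0:ℝ) < ‖g q‖ ^ 2 := fun q => by
    have : 0 < ‖g q‖ := norm_pos_iff.mpr (hg q)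
    positivity
  intro q
  induction q with
  | zero =>
    have h0 : ⟪g 0, d 0⟫ = -‖g 0‖ ^ 2 := by
      rw [hd0, inner_neg_right, real_inner_self_eq_norm_sq]
    have hB := hnorm 0
    refine ⟨⟨?_, ?_⟩, ?_⟩
    · rw [h0, div_le_div_iff₀ h1σ hB]; nlinarith
    · rw [h0, div_le_div_iff₀ hB h1σ]; nlinarith
    · rw [h0]; linarith
  | succ q ih =>
    obtain ⟨⟨hlo, hhi⟩, hneg⟩ := ih
    have hA := hnorm (q + 1)
    have hB := hnorm q
    set a := ⟪g (q + 1), t q⟫ with ha_def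
    set X := ⟪g (q + 1), d (q + 1)⟫ with hX_def
    have key : X = -‖g (q + 1)‖ ^ 2 + (‖g (q + 1)‖ ^ 2 / ‖g q‖ ^ 2) * a := by
      rw [hX_def, hFR q, inner_add_right, inner_neg_right, inner_smul_right,
        real_inner_self_eq_norm_sq]
    have hr : X / ‖g (q + 1)‖ ^ 2 = -1 + a / ‖g q‖ ^ 2 := by
      rw [key]; field_simp [norm_ne_zero_iff.mpr (hg (q + 1)), norm_ne_zero_iff.mpr (hg q)]
    have habs : |a| ≤ σ₂ * (-⟪g q, d q⟫) := by
      have := hwolfe q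
      rwa [abs_of_neg hneg] at this
    obtain ⟨ha1, ha2⟩ := abs_le.mp habs
    have hlb : -‖g q‖ ^ 2 ≤ ⟪g q, d q⟫ * (1 - σ₂) := by
      rw [div_le_div_iff₀ h1σ hB] at hlo; linarith
    -- bounds on a * (1 - σ₂)
    have h1 : a * (1 - σ₂) ≤ σ₂ * ‖g q‖ ^ 2 := by
      nlinarith [mul_le_mul_of_nonneg_right ha2 h1σ.le,
        mul_le_mul_of_nonneg_left hlb hσ0.le]
    have h2 : -(σ₂ * ‖g q‖ ^ 2) ≤ a * (1 - σ₂) := by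
      nlinarith [mul_le_mul_of_nonneg_right ha1 h1σ.le,
        mul_le_mul_of_nonneg_left hlb hσ0.le]
    -- bounds on s = a / ‖g q‖²
    have hs1 : a / ‖g q‖ ^ 2 * (1 - σ₂) ≤ σ₂ := by
      rw [div_mul_eq_mul_div, div_le_iff₀ hB]
      linarith
    have hs2 : -σ₂ ≤ a / ‖g q‖ ^ 2 * (1 - σ₂) := by
      rw [div_mul_eq_mul_div, le_div_iff₀ hB]
      linarith
    have hiu : X / ‖g (q + 1)‖ ^ 2 ≤ (2 * σ₂ - 1) / (1 - σ₂) := by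
      rw [hr, le_div_iff₀ h1σ]
      nlinarith
    refine ⟨⟨?_, hiu⟩, ?_⟩
    · rw [hr, div_le_iff₀ h1σ]
      nlinarith
    · have hub : (2 * σ₂ - 1) / (1 - σ₂) < 0 :=
        div_neg_of_neg_of_pos (by linarith) h1σ
      have hX : X / ‖g (q + 1)‖ ^ 2 < 0 := lt_of_le_of_lt hiu hub
      rcases div_neg_iff.mp hX with ⟨_, h⟩ | ⟨h, _⟩
      · linarith
      · exact h
end

section
/- Let V be a real inner product space, σ₂ > 0, and let g₁, g₂, d₁, t ∈ V with g₁ ≠ 0 and g₂ ≠ 0. Suppose ⟨g₁, d₁⟩ ≤ 0, that d₂ = −g₂ + (‖g₂‖²/‖g₁‖²) • t, and that |⟨g₂, t⟩| ≤ −σ₂ · ⟨g₁, d₁⟩. Then −1 + σ₂ · ⟨g₁, d₁⟩/‖g₁‖² ≤ ⟨g₂, d₂⟩/‖g₂‖² ≤ −1 − σ₂ · ⟨g₁, d₁⟩/‖g₁‖². -/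
open RealInnerProductSpace

/-- One induction step of the sandwich inequality (equation (49) in the paper):
for consecutive Fletcher–Reeves directions under the strong Wolfe condition. -/
theorem prcgd_sandwich_step
    {V : Type*} [NormedAddCommGroup V] [InnerProductSpace ℝ V]
    (σ₂ : ℝ) (hσ₂ : 0 < σ₂)
    (g₁ g₂ d₁ d₂ t : V)
    (hg₁ : g₁ ≠ 0) (hg₂ : g₂ ≠ 0)
    (hdesc : ⟪g₁, d₁⟫ ≤ 0)
    (hd₂ : d₂ = -g₂ + (‖g₂‖ ^ 2 / ‖g₁‖ ^ 2) • t)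
    (hwolfe : |⟪g₂, t⟫| ≤ -σ₂ * ⟪g₁, d₁⟫) :
    -1 + σ₂ * (⟪g₁, d₁⟫ / ‖g₁‖ ^ 2) ≤ ⟪g₂, d₂⟫ / ‖g₂‖ ^ 2 ∧
    ⟪g₂, d₂⟫ / ‖g₂‖ ^ 2 ≤ -1 - σ₂ * (⟪g₁, d₁⟫ / ‖g₁‖ ^ 2) := by
  have h1 : (0:ℝ) < ‖g₁‖ ^ 2 := pow_pos (norm_pos_iff.mpr hg₁) 2
  have h2 : (0:ℝ) < ‖g₂‖ ^ 2 := pow_pos (norm_pos_iff.mpr hg₂) 2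
  have hip : ⟪g₂, d₂⟫ = -‖g₂‖ ^ 2 + (‖g₂‖ ^ 2 / ‖g₁‖ ^ 2) * ⟪g₂, t⟫ := by
    rw [hd₂, inner_add_right, inner_neg_right, inner_smul_right,
      real_inner_self_eq_norm_sq]
  have hdiv : ⟪g₂, d₂⟫ / ‖g₂‖ ^ 2 = -1 + ⟪g₂, t⟫ / ‖g₁‖ ^ 2 := by
    rw [hip]; field_simp
  have hub := abs_le.mp hwolfe
  constructor
  · rw [hdiv]
    have : -(-σ₂ * ⟪g₁, d₁⟫) / ‖g₁‖ ^ 2 ≤ ⟪g₂, t⟫ / ‖g₁‖ ^ 2 :=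
      div_le_div_of_nonneg_right (by linarith [hub.1]) h1.le |>.trans_eq rfl
    calc -1 + σ₂ * (⟪g₁, d₁⟫ / ‖g₁‖ ^ 2) = -1 + -(-σ₂ * ⟪g₁, d₁⟫) / ‖g₁‖ ^ 2 := by ring
      _ ≤ -1 + ⟪g₂, t⟫ / ‖g₁‖ ^ 2 := by linarith
  · rw [hdiv]
    have : ⟪g₂, t⟫ / ‖g₁‖ ^ 2 ≤ (-σ₂ * ⟪g₁, d₁⟫) / ‖g₁‖ ^ 2 :=
      div_le_div_of_nonneg_right hub.2 h1.le
    calc -1 + ⟪g₂, t⟫ / ‖g₁‖ ^ 2 ≤ -1 + (-σ₂ * ⟪g₁, d₁⟫) / ‖g₁‖ ^ 2 := by linarith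
      _ = -1 - σ₂ * (⟪g₁, d₁⟫ / ‖g₁‖ ^ 2) := by ring
end

section
/- Let V be a real inner product space, σ₂ ∈ (0, 1), and let g₁, g₂, d₁, t ∈ V with g₁ ≠ 0. Suppose d₂ = −g₂ + (‖g₂‖²/‖g₁‖²) • t, that ‖t‖ ≤ ‖d₁‖, and that |⟨g₂, t⟩| ≤ (σ₂/(1−σ₂)) · ‖g₁‖². Then ‖d₂‖² ≤ ((1+σ₂)/(1−σ₂)) · ‖g₂‖² + (‖g₂‖⁴/‖g₁‖⁴) · ‖d₁‖². -/
open RealInnerProductSpace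

/-- One-step norm bound on Fletcher–Reeves search directions (inequality (51)
in the paper): `‖d₂‖² ≤ ((1+σ₂)/(1-σ₂))‖g₂‖² + (‖g₂‖⁴/‖g₁‖⁴)‖d₁‖²`. -/
theorem prcgd_direction_norm_step
    {V : Type*} [NormedAddCommGroup V] [InnerProductSpace ℝ V]
    (σ₂ : ℝ) (hσ₂ : 0 < σ₂ ∧ σ₂ < 1)
    (g₁ g₂ d₁ d₂ t : V)
    (hg₁ : g₁ ≠ 0)
    (hd₂ : d₂ = -g₂ + (‖g₂‖ ^ 2 / ‖g₁‖ ^ 2) • t)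
    (htran : ‖t‖ ≤ ‖d₁‖)
    (hwolfe : |⟪g₂, t⟫| ≤ (σ₂ / (1 - σ₂)) * ‖g₁‖ ^ 2) :
    ‖d₂‖ ^ 2 ≤ ((1 + σ₂) / (1 - σ₂)) * ‖g₂‖ ^ 2 +
      (‖g₂‖ ^ 4 / ‖g₁‖ ^ 4) * ‖d₁‖ ^ 2 := by
  obtain ⟨hσ0, hσ1⟩ := hσ₂
  have hg1 : (0:ℝ) < ‖g₁‖ ^ 2 := by
    have : 0 < ‖g₁‖ := norm_pos_iff.mpr hg₁
    positivity
  set β : ℝ := ‖g₂‖ ^ 2 / ‖g₁‖ ^ 2 with hβ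
  have hβ0 : 0 ≤ β := by positivity
  have hexp : ‖d₂‖ ^ 2 = ‖g₂‖ ^ 2 - 2 * β * ⟪g₂, t⟫ + β ^ 2 * ‖t‖ ^ 2 := by
    rw [hd₂, @norm_add_sq_real, norm_neg, norm_smul, inner_smul_right, inner_neg_left]
    simp [abs_of_nonneg hβ0]
    ring
  have h1 : -2 * β * ⟪g₂, t⟫ ≤ 2 * β * ((σ₂ / (1 - σ₂)) * ‖g₁‖ ^ 2) := by
    have := neg_abs_le ⟪g₂, t⟫
    nlinarith
  have h2 : β ^ 2 * ‖t‖ ^ 2 ≤ (‖g₂‖ ^ 4 / ‖g₁‖ ^ 4) * ‖d₁‖ ^ 2 := by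
    have ht0 : (0:ℝ) ≤ ‖t‖ := norm_nonneg t
    have : β ^ 2 = ‖g₂‖ ^ 4 / ‖g₁‖ ^ 4 := by
      rw [hβ, div_pow]; ring_nf
    rw [this]
    have : ‖t‖ ^ 2 ≤ ‖d₁‖ ^ 2 := by nlinarith
    have h4 : (0:ℝ) ≤ ‖g₂‖ ^ 4 / ‖g₁‖ ^ 4 := by positivity
    nlinarith
  have hβval : β * ‖g₁‖ ^ 2 = ‖g₂‖ ^ 2 := by rw [hβ, div_mul_cancel₀ _ hg1.ne']
  have h3 : ‖g₂‖ ^ 2 + 2 * β * ((σ₂ / (1 - σ₂)) * ‖g₁‖ ^ 2)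
      ≤ ((1 + σ₂) / (1 - σ₂)) * ‖g₂‖ ^ 2 := by
    have hs : (0:ℝ) < 1 - σ₂ := by linarith
    rw [show 2 * β * ((σ₂ / (1 - σ₂)) * ‖g₁‖ ^ 2) = 2 * (σ₂ / (1 - σ₂)) * (β * ‖g₁‖ ^ 2) by ring,
      hβval]
    have key : (1 + σ₂) / (1 - σ₂) = 1 + 2 * (σ₂ / (1 - σ₂)) := by
      field_simp; ring
    rw [key]; apply le_of_eq; ring
  linarith [hexp ▸ le_refl (‖d₂‖ ^ 2)]
end

section
/- Let V be a real inner product space, σ ≥ 1, and let g, d : ℕ → V be sequences with g(q) ≠ 0 for all q, d(0) = −g(0), and ‖d(q+1)‖² ≤ σ · ‖g(q+1)‖² + (‖g(q+1)‖⁴/‖g(q)‖⁴) · ‖d(q)‖² for all q. Then for every q, ‖d(q)‖² ≤ σ · ‖g(q)‖⁴ · Σ_{j=0}^{q} ‖g(j)‖^{−2}. -/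
/-- Unrolling the one-step norm bound on the Fletcher–Reeves search directions
yields `‖d q‖² ≤ σ ‖g q‖⁴ ∑_{j=0}^{q} ‖g j‖⁻²`. -/
theorem prcgd_direction_norm_sum_bound
    {V : Type*} [NormedAddCommGroup V] [InnerProductSpace ℝ V]
    (σ : ℝ) (hσ : 1 ≤ σ)
    (g d : ℕ → V)
    (hg : ∀ q, g q ≠ 0)
    (hd0 : d 0 = -g 0)
    (hrec : ∀ q, ‖d (q + 1)‖ ^ 2 ≤ σ * ‖g (q + 1)‖ ^ 2 +
      (‖g (q + 1)‖ ^ 4 / ‖g q‖ ^ 4) * ‖d q‖ ^ 2) :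
    ∀ q, ‖d q‖ ^ 2 ≤ σ * ‖g q‖ ^ 4 * ∑ j ∈ Finset.range (q + 1), (‖g j‖ ^ 2)⁻¹ := by
  intro q
  induction q with
  | zero =>
      have h0 : ‖g 0‖ ≠ 0 := norm_ne_zero_iff.mpr (hg 0)
      have hs : ∑ j ∈ Finset.range (0 + 1), (‖g j‖ ^ 2)⁻¹ = (‖g 0‖ ^ 2)⁻¹ := by simp
      rw [hs, hd0, norm_neg,
        show σ * ‖g 0‖ ^ 4 * (‖g 0‖ ^ 2)⁻¹ = σ * ‖g 0‖ ^ 2 by field_simp]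
      nlinarith [sq_nonneg (‖g 0‖), norm_pos_iff.mpr (hg 0)]
  | succ q ih =>
      have hq : ‖g q‖ ≠ 0 := norm_ne_zero_iff.mpr (hg q)
      have hq1 : ‖g (q+1)‖ ≠ 0 := norm_ne_zero_iff.mpr (hg (q+1))
      have hrat : (0:ℝ) ≤ ‖g (q + 1)‖ ^ 4 / ‖g q‖ ^ 4 := by positivity
      set S := ∑ j ∈ Finset.range (q + 1), (‖g j‖ ^ 2)⁻¹ with hS
      calc ‖d (q+1)‖ ^ 2
          ≤ σ * ‖g (q + 1)‖ ^ 2 + (‖g (q + 1)‖ ^ 4 / ‖g q‖ ^ 4) * ‖d q‖ ^ 2 := hrec q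
        _ ≤ σ * ‖g (q + 1)‖ ^ 2 + (‖g (q + 1)‖ ^ 4 / ‖g q‖ ^ 4) *
              (σ * ‖g q‖ ^ 4 * S) := by gcongr
        _ = σ * ‖g (q+1)‖ ^ 4 * ∑ j ∈ Finset.range (q + 2), (‖g j‖ ^ 2)⁻¹ := by
            rw [show q + 2 = (q + 1) + 1 from rfl, Finset.sum_range_succ, ← hS, mul_add]
            field_simp
            ring
end

section
/- Let H be a complex N_e × N_t matrix and define f on complex N_t × N_s matrices by f(W) = Re(det(I + H W Wᴴ Hᴴ)). Then f is Fréchet differentiable over ℝ at every W, with derivative given by the real-linear map Δ ↦ 2 · Re(Tr(Wᴴ Hᴴ · adj(F) · H · Δ)), where F = I + H W Wᴴ Hᴴ. Equivalently, the Euclidean (Wirtinger-type) gradient of f with respect to the real Frobenius inner product is 2 · Hᴴ adj(F) H W. -/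
open Matrix

attribute [local instance] Matrix.frobeniusNormedAddCommGroup Matrix.frobeniusNormedSpace


noncomputable def detCML (n : ℕ) :
    ContinuousMultilinearMap ℝ (fun _ : Fin n => (Fin n → ℂ)) ℂ :=
  MultilinearMap.mkContinuous
    ((detRowAlternating : (Fin n → ℂ) [⋀^Fin n]→ₗ[ℂ] ℂ).toMultilinearMap.restrictScalars ℝ)
    (Nat.factorial n) (by
      intro m
      show ‖(Matrix.of m).det‖ ≤ _
      rw [Matrix.det_apply]
      refine (norm_sum_le _ _).trans ?_
      have hterm : ∀ σ : Equiv.Perm (Fin n),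
          ‖Equiv.Perm.sign σ • ∏ i, Matrix.of m (σ i) i‖ ≤ ∏ i, ‖m i‖ := by
        intro σ
        have hs : ‖Equiv.Perm.sign σ • ∏ i, Matrix.of m (σ i) i‖
            = ‖∏ i, Matrix.of m (σ i) i‖ := by
          rcases Int.units_eq_one_or (Equiv.Perm.sign σ) with h | h <;>
            simp [h, Units.smul_def]
        rw [hs]
        calc ‖∏ i, Matrix.of m (σ i) i‖ = ∏ i, ‖Matrix.of m (σ i) i‖ := by
              simp [norm_prod]
          _ ≤ ∏ i, ‖m (σ i)‖ := by
              refine Finset.prod_le_prod (fun i _ => norm_nonneg _) (fun i _ => ?_)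
              exact norm_le_pi_norm (m (σ i)) i
          _ = ∏ i, ‖m i‖ := Equiv.prod_comp σ (fun i => ‖m i‖)
      refine (Finset.sum_le_sum (fun σ _ => hterm σ)).trans ?_
      simp [Finset.sum_const, Fintype.card_perm, nsmul_eq_mul])

lemma detCML_apply (n : ℕ) (m : Fin n → Fin n → ℂ) :
    detCML n m = (Matrix.of m).det := rfl

lemma sum_det_updateRow {n : Type*} [DecidableEq n] [Fintype n] (A E : Matrix n n ℂ) :
    ∑ i, (A.updateRow i (E i)).det = (A.adjugate * E).trace := by
  have h : ∀ i, (A.updateRow i (E i)).det = ∑ j, A.adjugate j i * E i j := by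
    intro i
    rw [← Matrix.cramer_transpose_apply, Matrix.cramer_eq_adjugate_mulVec,
      Matrix.mulVec, dotProduct]
    simp [← Matrix.adjugate_transpose, Matrix.transpose_apply, mul_comm]
  simp_rw [h, Matrix.trace, Matrix.diag, Matrix.mul_apply]
  rw [Finset.sum_comm]


noncomputable def detDerivCLM (n : ℕ) (A : Matrix (Fin n) (Fin n) ℂ) :
    Matrix (Fin n) (Fin n) ℂ →L[ℝ] ℂ :=
  LinearMap.toContinuousLinearMap
    { toFun := fun E => (A.adjugate * E).trace
      map_add' := fun E₁ E₂ => by simp [Matrix.mul_add]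
      map_smul' := fun r E => by simp [Matrix.mul_smul] }

lemma detDerivCLM_apply (n : ℕ) (A E : Matrix (Fin n) (Fin n) ℂ) :
    detDerivCLM n A E = (A.adjugate * E).trace := rfl

lemma det_hasFDerivAt (n : ℕ) (A : Matrix (Fin n) (Fin n) ℂ) :
    HasFDerivAt (fun M : Matrix (Fin n) (Fin n) ℂ => M.det) (detDerivCLM n A) A := by
  let eL : Matrix (Fin n) (Fin n) ℂ ≃L[ℝ] (Fin n → Fin n → ℂ) :=
    LinearEquiv.toContinuousLinearEquiv
      (LinearEquiv.refl ℝ (Matrix (Fin n) (Fin n) ℂ) :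
        Matrix (Fin n) (Fin n) ℂ ≃ₗ[ℝ] (Fin n → Fin n → ℂ))
  have h := ((detCML n).hasFDerivAt (x := eL A)).comp A eL.hasFDerivAt
  rw [show (⇑(detCML n) ∘ ⇑eL) = (fun M : Matrix (Fin n) (Fin n) ℂ => M.det) from rfl] at h
  refine h.congr_fderiv (Eq.symm ?_)
  refine ContinuousLinearMap.ext fun E => ?_
  show (A.adjugate * E).trace = ((detCML n).linearDeriv (eL A)) (eL E)
  rw [← sum_det_updateRow]
  rw [ContinuousMultilinearMap.linearDeriv_apply]
  rfl

lemma isBoundedBilinearMap_matrix_mul {l m n : ℕ} :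
    IsBoundedBilinearMap ℝ
      (fun p : Matrix (Fin l) (Fin m) ℂ × Matrix (Fin m) (Fin n) ℂ => p.1 * p.2) where
  add_left := fun A A' B => Matrix.add_mul A A' B
  smul_left := fun r A B => Matrix.smul_mul r A B
  add_right := fun A B B' => Matrix.mul_add A B B'
  smul_right := fun r A B => Matrix.mul_smul A r B
  bound := ⟨1, one_pos, fun A B => by
    simpa using Matrix.frobenius_norm_mul A B⟩

noncomputable def conjTCLM {m n : ℕ} :
    Matrix (Fin m) (Fin n) ℂ →L[ℝ] Matrix (Fin n) (Fin m) ℂ :=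
  LinearMap.toContinuousLinearMap
    { toFun := fun X => Xᴴ
      map_add' := fun X Y => Matrix.conjTranspose_add X Y
      map_smul' := fun r X => by
        ext i j
        simp [Matrix.conjTranspose_apply] }

noncomputable def lmulCLM {l m n : ℕ} (A : Matrix (Fin l) (Fin m) ℂ) :
    Matrix (Fin m) (Fin n) ℂ →L[ℝ] Matrix (Fin l) (Fin n) ℂ :=
  LinearMap.toContinuousLinearMap
    { toFun := fun X => A * X
      map_add' := fun X Y => Matrix.mul_add A X Y
      map_smul' := fun r X => Matrix.mul_smul A r X }

noncomputable def rmulCLM {l m n : ℕ} (A : Matrix (Fin m) (Fin n) ℂ) :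
    Matrix (Fin l) (Fin m) ℂ →L[ℝ] Matrix (Fin l) (Fin n) ℂ :=
  LinearMap.toContinuousLinearMap
    { toFun := fun X => X * A
      map_add' := fun X Y => Matrix.add_mul X Y A
      map_smul' := fun r X => Matrix.smul_mul r X A }

/-- Euclidean gradient of `W ↦ Re det(I + H W Wᴴ Hᴴ)` (Lemma 1, gradient w.r.t.
`W`): the real Fréchet derivative at `W` is `Δ ↦ 2 Re Tr(Wᴴ Hᴴ adj(F) H Δ)`
with `F = I + H W Wᴴ Hᴴ`, i.e. the gradient is `2 Hᴴ adj(F) H W`. -/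
theorem euclidean_gradient_det_W
    (Ne Nt Ns : ℕ) (H : Matrix (Fin Ne) (Fin Nt) ℂ)
    (W : Matrix (Fin Nt) (Fin Ns) ℂ) :
    ∃ L : Matrix (Fin Nt) (Fin Ns) ℂ →L[ℝ] ℝ,
      HasFDerivAt
        (fun X : Matrix (Fin Nt) (Fin Ns) ℂ => ((1 + H * X * Xᴴ * Hᴴ).det).re)
        L W ∧
      ∀ Δ : Matrix (Fin Nt) (Fin Ns) ℂ,
        L Δ = 2 * ((Wᴴ * Hᴴ * (1 + H * W * Wᴴ * Hᴴ).adjugate * H * Δ).trace).re := by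
  classical
  set pairCLM : Matrix (Fin Nt) (Fin Ns) ℂ →L[ℝ]
      (Matrix (Fin Ne) (Fin Ns) ℂ × Matrix (Fin Ns) (Fin Ne) ℂ) :=
    (lmulCLM H).prod ((rmulCLM Hᴴ).comp conjTCLM) with hpair
  set Fq : Matrix (Fin Ne) (Fin Ne) ℂ := 1 + (H * W) * (Wᴴ * Hᴴ) with hFq
  set D : Matrix (Fin Nt) (Fin Ns) ℂ →L[ℝ] Matrix (Fin Ne) (Fin Ne) ℂ :=
    (isBoundedBilinearMap_matrix_mul.deriv (pairCLM W)).comp pairCLM with hD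
  refine ⟨Complex.reCLM.comp ((detDerivCLM Ne Fq).comp D), ?_, ?_⟩
  · have hq : HasFDerivAt
        (fun X : Matrix (Fin Nt) (Fin Ns) ℂ => (H * X) * (Xᴴ * Hᴴ)) D W := by
      have h1 := (isBoundedBilinearMap_matrix_mul.hasFDerivAt (pairCLM W)).comp W
        pairCLM.hasFDerivAt
      exact h1
    have hFd : HasFDerivAt
        (fun X : Matrix (Fin Nt) (Fin Ns) ℂ => 1 + (H * X) * (Xᴴ * Hᴴ)) D W :=
      hq.const_add 1
    have hdet := (det_hasFDerivAt Ne Fq).comp W hFd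
    have hre := (Complex.reCLM.hasFDerivAt (x := Fq.det)).comp W hdet
    have hfun : (fun X : Matrix (Fin Nt) (Fin Ns) ℂ => ((1 + H * X * Xᴴ * Hᴴ).det).re)
        = fun X : Matrix (Fin Nt) (Fin Ns) ℂ =>
            Complex.reCLM ((1 + (H * X) * (Xᴴ * Hᴴ)).det) := by
      funext X; rw [Matrix.mul_assoc]; rfl
    rw [hfun]
    exact hre
  · intro Δ
    have hL : (Complex.reCLM.comp ((detDerivCLM Ne Fq).comp D)) Δ
        = ((Fq.adjugate * ((H * W) * (Δᴴ * Hᴴ) + (H * Δ) * (Wᴴ * Hᴴ))).trace).re := by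
      simp only [ContinuousLinearMap.comp_apply, hD]
      show ((Fq.adjugate * isBoundedBilinearMap_matrix_mul.deriv (pairCLM W) (pairCLM Δ)).trace).re = _
      rw [isBoundedBilinearMap_matrix_mul.deriv_apply]
      rfl
    rw [hL]
    set A := Fq.adjugate with hA
    have hHerm : Fqᴴ = Fq := by
      simp [hFq, Matrix.conjTranspose_add, Matrix.conjTranspose_mul, Matrix.mul_assoc]
    have hadj : Aᴴ = A := by
      rw [hA, Matrix.adjugate_conjTranspose, hHerm]
    have hFeq : (1 + H * W * Wᴴ * Hᴴ).adjugate = A := by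
      rw [hA, hFq, Matrix.mul_assoc]
    rw [hFeq]
    set z := (Wᴴ * Hᴴ * A * H * Δ).trace with hz
    have ht1 : ((H * Δ) * (Wᴴ * Hᴴ) * A).trace = z := by
      rw [hz]
      rw [Matrix.trace_mul_comm]
      simpa [Matrix.mul_assoc] using Matrix.trace_mul_comm (A * (H * Δ)) (Wᴴ * Hᴴ)
    have ht2 : ((H * W) * (Δᴴ * Hᴴ) * A).trace = star z := by
      have : star z = ((Wᴴ * Hᴴ * A * H * Δ)ᴴ).trace := (Matrix.trace_conjTranspose _).symm
      rw [this]
      simp only [Matrix.conjTranspose_mul, Matrix.conjTranspose_conjTranspose, hadj]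
      rw [Matrix.trace_mul_comm]
      simpa [Matrix.mul_assoc] using Matrix.trace_mul_comm (A * (H * W)) (Δᴴ * Hᴴ)
    have hsplit : (A * ((H * W) * (Δᴴ * Hᴴ) + (H * Δ) * (Wᴴ * Hᴴ))).trace = star z + z := by
      rw [Matrix.mul_add, Matrix.trace_add, Matrix.trace_mul_comm A, Matrix.trace_mul_comm A,
        ht1, ht2]
    rw [hsplit]
    simp [Complex.add_re, Complex.conj_re]
    ring
end

section
/- Let S be a set and let a, b : S → ℝ be functions with a(x) > 0 and b(x) > 0 for all x ∈ S. Suppose there exists x₀ ∈ S with b(x₀) < a(x₀). Then for any x* ∈ S, x* is a minimizer of x ↦ b(x)/a(x) on S if and only if x* is a maximizer of x ↦ max(log(a(x)) − log(b(x)), 0) on S. -/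
/-- Equivalence of the secrecy-rate maximization problem with the
determinant-ratio minimization problem: provided some feasible point has
`b(x₀) < a(x₀)` (positive secrecy rate), `x*` minimizes `b/a` on `S` iff `x*`
maximizes `[log a - log b]⁺` on `S`. -/
theorem secrecy_rate_ratio_equivalence
    {α : Type*} (S : Set α) (a b : α → ℝ)
    (ha : ∀ x ∈ S, 0 < a x) (hb : ∀ x ∈ S, 0 < b x)
    (x₀ : α) (hx₀ : x₀ ∈ S) (hpos : b x₀ < a x₀)
    (xs : α) (hxs : xs ∈ S) :
    IsMinOn (fun x => b x / a x) S xs ↔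
      IsMaxOn (fun x => max (Real.log (a x) - Real.log (b x)) 0) S xs := by
  have hax := ha xs hxs
  have hbx := hb xs hxs
  have ha0 := ha x₀ hx₀
  have hb0 := hb x₀ hx₀
  constructor
  · intro hmin y hy
    have hay := ha y hy
    have hby := hb y hy
    have h1 : b xs / a xs ≤ b x₀ / a x₀ := hmin hx₀
    have h2 : b xs / a xs < 1 := lt_of_le_of_lt h1 ((div_lt_one ha0).2 hpos)
    have hblt : b xs < a xs := (div_lt_one hax).1 h2
    have hxspos : 0 < Real.log (a xs) - Real.log (b xs) :=
      sub_pos.2 (Real.log_lt_log hbx hblt)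
    have hfle : b xs / a xs ≤ b y / a y := hmin hy
    have hlog : Real.log (b xs / a xs) ≤ Real.log (b y / a y) :=
      Real.log_le_log (div_pos hbx hax) hfle
    rw [Real.log_div hbx.ne' hax.ne', Real.log_div hby.ne' hay.ne'] at hlog
    simp only [Set.mem_setOf_eq]
    rw [max_eq_left hxspos.le]
    exact max_le (by linarith) hxspos.le
  · intro hmax y hy
    have hay := ha y hy
    have hby := hb y hy
    have hΔ0 : 0 < Real.log (a x₀) - Real.log (b x₀) :=
      sub_pos.2 (Real.log_lt_log hb0 hpos)
    have h1 : max (Real.log (a x₀) - Real.log (b x₀)) 0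
        ≤ max (Real.log (a xs) - Real.log (b xs)) 0 := hmax hx₀
    have hgpos : 0 < max (Real.log (a xs) - Real.log (b xs)) 0 :=
      lt_of_lt_of_le (lt_of_lt_of_le hΔ0 (le_max_left _ _)) h1
    have hΔxs : 0 < Real.log (a xs) - Real.log (b xs) := by
      rcases lt_max_iff.1 hgpos with h | h
      · exact h
      · exact absurd h (lt_irrefl 0)
    have hblt : b xs < a xs := (Real.log_lt_log_iff hbx hax).1 (by linarith)
    simp only [Set.mem_setOf_eq]
    have hy' : max (Real.log (a y) - Real.log (b y)) 0
        ≤ max (Real.log (a xs) - Real.log (b xs)) 0 := hmax hy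
    rw [max_eq_left hΔxs.le] at hy'
    rcases le_or_gt (Real.log (a y) - Real.log (b y)) 0 with hc | hc
    · -- a y ≤ b y, so b y / a y ≥ 1 > b xs / a xs
      have : Real.log (a y) ≤ Real.log (b y) := by linarith
      have hab : a y ≤ b y := (Real.log_le_log_iff hay hby).1 this
      have : b xs / a xs < 1 := (div_lt_one hax).2 hblt
      have : (1:ℝ) ≤ b y / a y := (one_le_div hay).2 hab
      linarith [(div_lt_one hax).2 hblt]
    · have hΔy : Real.log (a y) - Real.log (b y)
          ≤ Real.log (a xs) - Real.log (b xs) :=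
        le_trans (le_max_left _ _) hy'
      have hlog : Real.log (b xs / a xs) ≤ Real.log (b y / a y) := by
        rw [Real.log_div hbx.ne' hax.ne', Real.log_div hby.ne' hay.ne']
        linarith
      exact (Real.log_le_log_iff (div_pos hbx hax) (div_pos hby hay)).1 hlog
end
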